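/- arXiv:2102.04182 — 2 statements merged into one kernel-verified Lean document; each statement's English description precedes it below -/
import Mathlib

section
/- For every error support E ⊆ {1,…,L}, every matrix Y ∈ F_q^{n×L} with error support contained in E, all integers ν,θ ≥ 1, and every integer i with 0 ≤ i < δ_{ν,θ}, the pair (x^i·Λ·v, x^i·Λ·d) belongs to S_{Y,ν,θ}; consequently ⟨x^iΛv, x^iΛd⟩_{0≤i<δ_{ν,θ}} ⊆ S_{Y,ν,θ}. -/
open Polynomial

/-- The solution space `S_{Y,ν,θ}` of the key equations: pairs `(φ, ψ)` with
`deg φᵢ < ν`, `deg ψ < θ` and `φᵢ(α_j) = Y_{i,j} ψ(α_j)` for all `i, j`. -/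
def keySol {F : Type*} [Field F] {n L : ℕ}
    (α : Fin L → F) (Y : Fin n → Fin L → F) (ν θ : ℕ) :
    Set ((Fin n → F[X]) × F[X]) :=
  {p | (∀ i, (p.1 i).degree < (ν : WithBot ℕ)) ∧ p.2.degree < (θ : WithBot ℕ) ∧
    ∀ i j, (p.1 i).eval (α j) = Y i j * p.2.eval (α j)}

/-- The error locator polynomial `Λ = ∏_{j ∈ E} (x - α_j)`. -/
noncomputable def errLoc {F : Type*} [Field F] {L : ℕ}
    (α : Fin L → F) (E : Finset (Fin L)) : F[X] :=
  ∏ j ∈ E, (X - C (α j))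

/-- The `F`-linear span `⟨xⁱΛv, xⁱΛd⟩_{0 ≤ i < δ}`, equal to `{(0,0)}` when `δ ≤ 0`. -/
noncomputable def lamSpan {F : Type*} [Field F] {n L : ℕ}
    (α : Fin L → F) (E : Finset (Fin L)) (v : Fin n → F[X]) (d : F[X]) (δ : ℤ) :
    Submodule F ((Fin n → F[X]) × F[X]) :=
  Submodule.span F {p : (Fin n → F[X]) × F[X] | ∃ i : ℕ, (i : ℤ) < δ ∧
    p = (fun k => X ^ i * errLoc α E * v k, X ^ i * errLoc α E * d)}

/-- `deg(v) = max_i deg(vᵢ)` for a vector of polynomials. -/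
noncomputable def vecDeg {F : Type*} [Semiring F] {n : ℕ} (v : Fin n → F[X]) : ℕ :=
  Finset.univ.sup fun i => (v i).natDegree

/-- `deg(A) = max_{i,j} deg(A_{i,j})` for a matrix of polynomials. -/
noncomputable def matDeg {F : Type*} [Semiring F] {n : ℕ}
    (A : Matrix (Fin n) (Fin n) F[X]) : ℕ :=
  Finset.univ.sup fun p : Fin n × Fin n => (A p.1 p.2).natDegree

/-- `𝓛(ν,θ) = min{max{N−1+θ, D−1+ν}, max{deg(A)+ν, deg(b)+θ}}`. -/
def Lbound (N D degA degb ν θ : ℕ) : ℕ :=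
  min (max (N - 1 + θ) (D - 1 + ν)) (max (degA + ν) (degb + θ))

section KeyEquations

variable {F : Type*} [Field F] {n L : ℕ}

theorem natDegree_errLoc (α : Fin L → F) (E : Finset (Fin L)) :
    (errLoc α E).natDegree = E.card := by
  rw [errLoc, natDegree_prod _ _ fun j _ => X_sub_C_ne_zero (α j)]
  simp

theorem eval_errLoc_eq_zero {α : Fin L → F} {E : Finset (Fin L)} {j : Fin L} (hj : j ∈ E) :
    (errLoc α E).eval (α j) = 0 := by
  rw [errLoc, eval_prod]
  exact Finset.prod_eq_zero hj (by simp)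

theorem natDegree_le_vecDeg (v : Fin n → F[X]) (k : Fin n) : (v k).natDegree ≤ vecDeg v :=
  Finset.le_sup (f := fun i => (v i).natDegree) (Finset.mem_univ k)

theorem degree_X_pow_mul_errLoc_mul_lt (α : Fin L → F) (E : Finset (Fin L)) {p : F[X]}
    {i m : ℕ} (h : p.natDegree + E.card + i < m) :
    (X ^ i * errLoc α E * p).degree < (m : WithBot ℕ) := by
  have hle : (X ^ i * errLoc α E * p).natDegree ≤ i + E.card + p.natDegree :=
    natDegree_mul_le_of_le (natDegree_mul_le_of_le (natDegree_X_pow_le i)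
      (natDegree_errLoc α E).le) le_rfl
  exact degree_le_natDegree.trans_lt (by exact_mod_cast (show _ < m by omega))

def keySolSubmodule (α : Fin L → F) (Y : Fin n → Fin L → F) (ν θ : ℕ) :
    Submodule F ((Fin n → F[X]) × F[X]) where
  carrier := keySol α Y ν θ
  zero_mem' := ⟨fun _ => by simp, by simp, fun _ _ => by simp⟩
  add_mem' := by
    rintro p q ⟨hp₁, hp₂, hp₃⟩ ⟨hq₁, hq₂, hq₃⟩
    refine ⟨fun i => (degree_add_le _ _).trans_lt (max_lt (hp₁ i) (hq₁ i)),
      (degree_add_le _ _).trans_lt (max_lt hp₂ hq₂), fun i j => ?_⟩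
    simp only [Prod.fst_add, Prod.snd_add, Pi.add_apply, eval_add, hp₃ i j, hq₃ i j]
    ring
  smul_mem' := by
    rintro c p ⟨hp₁, hp₂, hp₃⟩
    refine ⟨fun i => (degree_smul_le _ _).trans_lt (hp₁ i),
      (degree_smul_le _ _).trans_lt hp₂, fun i j => ?_⟩
    simp only [Prod.smul_fst, Prod.smul_snd, Pi.smul_apply, eval_smul, hp₃ i j, smul_eq_mul]
    ring

/-- Off `E` the received values are those of `v / d`, and on `E` the factor `Λ` kills both
sides, so `(xⁱΛv, xⁱΛd)` satisfies every key equation. -/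
theorem X_pow_mul_errLoc_mem_keySol {v : Fin n → F[X]} {d : F[X]} {α : Fin L → F}
    (hdα : ∀ j, d.eval (α j) ≠ 0) {E : Finset (Fin L)} {Y : Fin n → Fin L → F}
    (hY : ∀ j, j ∉ E → ∀ i, Y i j = (v i).eval (α j) / d.eval (α j)) {ν θ i : ℕ}
    (hν : vecDeg v + E.card + i < ν) (hθ : d.natDegree + E.card + i < θ) :
    ((fun k => X ^ i * errLoc α E * v k, X ^ i * errLoc α E * d) :
      (Fin n → F[X]) × F[X]) ∈ keySol α Y ν θ := by
  refine ⟨fun k => degree_X_pow_mul_errLoc_mul_lt α E ?_,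
    degree_X_pow_mul_errLoc_mul_lt α E (by omega), fun k j => ?_⟩
  · have := natDegree_le_vecDeg v k
    omega
  by_cases hj : j ∈ E
  · simp [eval_errLoc_eq_zero hj]
  · simp only [eval_mul, hY j hj k]
    field_simp [hdα j]

theorem lamSpan_subset_keySol {α : Fin L → F} {E : Finset (Fin L)} {v : Fin n → F[X]}
    {d : F[X]} {Y : Fin n → Fin L → F} {ν θ : ℕ} {δ : ℤ}
    (h : ∀ i : ℕ, (i : ℤ) < δ → ((fun k => X ^ i * errLoc α E * v k, X ^ i * errLoc α E * d) :
      (Fin n → F[X]) × F[X]) ∈ keySol α Y ν θ) :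
    ↑(lamSpan α E v d δ) ⊆ keySol α Y ν θ :=
  Submodule.span_le (p := keySolSubmodule α Y ν θ).2 fun _ ⟨i, hi, hp⟩ => hp ▸ h i hi

end KeyEquations

theorem stmt1_general {F : Type*} [Field F] {n L : ℕ}
    (v : Fin n → F[X]) (d : F[X])
    (α : Fin L → F)
    (hdα : ∀ j, d.eval (α j) ≠ 0)
    (E : Finset (Fin L)) (ν θ : ℕ)
    (Y : Fin n → Fin L → F)
    (hY : ∀ j, j ∉ E → ∀ i, Y i j = (v i).eval (α j) / d.eval (α j)) :
    (∀ i : ℕ, (i : ℤ) < min ((ν : ℤ) - ((vecDeg v + E.card : ℕ) : ℤ))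
                           ((θ : ℤ) - ((d.natDegree + E.card : ℕ) : ℤ)) →
      ((fun k => X ^ i * errLoc α E * v k, X ^ i * errLoc α E * d) :
          (Fin n → F[X]) × F[X]) ∈ keySol α Y ν θ) ∧
    ↑(lamSpan α E v d
        (min ((ν : ℤ) - ((vecDeg v + E.card : ℕ) : ℤ))
             ((θ : ℤ) - ((d.natDegree + E.card : ℕ) : ℤ)))) ⊆ keySol α Y ν θ := by
  refine (fun hmem => ⟨hmem, lamSpan_subset_keySol hmem⟩) fun i hi => ?_
  rw [lt_min_iff] at hi
  exact X_pow_mul_errLoc_mem_keySol hdα hY (by omega) (by omega)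

/-- for every error support `E`, every `Y` with error support contained in `E`,
all `ν,θ ≥ 1`, and every `0 ≤ i < δ_{ν,θ}`, the pair `(xⁱΛv, xⁱΛd)` belongs to `S_{Y,ν,θ}`;
consequently `⟨xⁱΛv, xⁱΛd⟩_{0≤i<δ_{ν,θ}} ⊆ S_{Y,ν,θ}`. -/
theorem stmt1 {F : Type*} [Field F] {n L : ℕ} (hn : 0 < n)
    (A : Matrix (Fin n) (Fin n) F[X]) (b v : Fin n → F[X]) (d : F[X])
    (hdet : A.det ≠ 0) (hmonic : d.Monic)
    (hcop : ∀ g : F[X], (∀ i, g ∣ v i) → g ∣ d → IsUnit g)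
    (hsol : A.mulVec v = d • b)
    (α : Fin L → F) (hα : Function.Injective α)
    (hAα : ∀ j, (A.map (fun p => p.eval (α j))).det ≠ 0)
    (hdα : ∀ j, d.eval (α j) ≠ 0)
    (E : Finset (Fin L)) (ν θ : ℕ) (hν : 1 ≤ ν) (hθ : 1 ≤ θ)
    (Y : Fin n → Fin L → F)
    (hY : ∀ j, j ∉ E → ∀ i, Y i j = (v i).eval (α j) / d.eval (α j)) :
    (∀ i : ℕ, (i : ℤ) < min ((ν : ℤ) - ((vecDeg v + E.card : ℕ) : ℤ))
                           ((θ : ℤ) - ((d.natDegree + E.card : ℕ) : ℤ)) →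
      ((fun k => X ^ i * errLoc α E * v k, X ^ i * errLoc α E * d) :
          (Fin n → F[X]) × F[X]) ∈ keySol α Y ν θ) ∧
    ↑(lamSpan α E v d
        (min ((ν : ℤ) - ((vecDeg v + E.card : ℕ) : ℤ))
             ((θ : ℤ) - ((d.natDegree + E.card : ℕ) : ℤ)))) ⊆ keySol α Y ν θ :=
  stmt1_general v d α hdα E ν θ Y hY
end

section
/- (Proposition 4.2, termination count of the early-termination strategy.) Let E ⊆ {1,…,L} be the error support. Then: (i) for all integers ν, θ ≥ 1 with δ_{ν,θ} > 0, one has 𝓛(ν,θ) ≥ 𝓛(deg(v),deg(d)) + |E| + 1; and (ii) for ν := deg(v)+|E|+1 and θ := deg(d)+|E|+1, one has 𝓛(ν,θ) = 𝓛(deg(v),deg(d)) + |E| + 1 and δ_{ν,θ} = 1 > 0. Consequently, the minimal value of 𝓛(ν,θ)+τ over pairs (ν,θ) with δ_{ν,θ} > 0 is L^s := 𝓛(deg(v),deg(d)) + |E| + 1 + τ. -/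
open Polynomial

lemma Lbound_add_add (N D degA degb ν θ k : ℕ) :
    Lbound N D degA degb (ν + k) (θ + k) = Lbound N D degA degb ν θ + k := by
  unfold Lbound; omega

lemma Lbound_mono (N D degA degb : ℕ) {ν ν' θ θ' : ℕ} (hν : ν ≤ ν') (hθ : θ ≤ θ') :
    Lbound N D degA degb ν θ ≤ Lbound N D degA degb ν' θ' := by
  unfold Lbound; omega

lemma zero_lt_min_sub_iff {ν θ a b : ℕ} :
    0 < min ((ν : ℤ) - (a : ℤ)) ((θ : ℤ) - (b : ℤ)) ↔ a < ν ∧ b < θ := by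
  simp only [lt_min_iff, sub_pos, Nat.cast_lt]

lemma Lbound_succ_shift (N D degA degb ν θ k : ℕ) :
    Lbound N D degA degb (ν + k + 1) (θ + k + 1) = Lbound N D degA degb ν θ + k + 1 := by
  simpa only [add_assoc] using Lbound_add_add N D degA degb ν θ (k + 1)

theorem stmt7_general {F : Type*} [Field F] {n L : ℕ}
    (A : Matrix (Fin n) (Fin n) F[X]) (b v : Fin n → F[X]) (d : F[X])
    (E : Finset (Fin L)) (N D τ : ℕ) :
    (∀ ν θ : ℕ, 1 ≤ ν → 1 ≤ θ →
      0 < min ((ν : ℤ) - ((vecDeg v + E.card : ℕ) : ℤ))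
              ((θ : ℤ) - ((d.natDegree + E.card : ℕ) : ℤ)) →
      Lbound N D (matDeg A) (vecDeg b) (vecDeg v) d.natDegree + E.card + 1 ≤
        Lbound N D (matDeg A) (vecDeg b) ν θ) ∧
    (Lbound N D (matDeg A) (vecDeg b) (vecDeg v + E.card + 1) (d.natDegree + E.card + 1) =
        Lbound N D (matDeg A) (vecDeg b) (vecDeg v) d.natDegree + E.card + 1 ∧
      min (((vecDeg v + E.card + 1 : ℕ) : ℤ) - ((vecDeg v + E.card : ℕ) : ℤ))
          (((d.natDegree + E.card + 1 : ℕ) : ℤ) - ((d.natDegree + E.card : ℕ) : ℤ)) = 1) ∧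
    IsLeast {x : ℕ | ∃ ν θ : ℕ, 1 ≤ ν ∧ 1 ≤ θ ∧
        0 < min ((ν : ℤ) - ((vecDeg v + E.card : ℕ) : ℤ))
                ((θ : ℤ) - ((d.natDegree + E.card : ℕ) : ℤ)) ∧
        x = Lbound N D (matDeg A) (vecDeg b) ν θ + τ}
      (Lbound N D (matDeg A) (vecDeg b) (vecDeg v) d.natDegree + E.card + 1 + τ) := by
  have lower_bound : ∀ ν θ : ℕ, 1 ≤ ν → 1 ≤ θ →
      0 < min ((ν : ℤ) - ((vecDeg v + E.card : ℕ) : ℤ))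
              ((θ : ℤ) - ((d.natDegree + E.card : ℕ) : ℤ)) →
      Lbound N D (matDeg A) (vecDeg b) (vecDeg v) d.natDegree + E.card + 1 ≤
        Lbound N D (matDeg A) (vecDeg b) ν θ := by
    intro ν θ _ _ hδ
    obtain ⟨hν, hθ⟩ := zero_lt_min_sub_iff.mp hδ
    rw [← Lbound_succ_shift]
    exact Lbound_mono _ _ _ _ hν hθ
  have shift_eq := Lbound_succ_shift N D (matDeg A) (vecDeg b) (vecDeg v) d.natDegree E.card
  refine ⟨lower_bound, ⟨shift_eq, by push_cast; omega⟩, ?_, ?_⟩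
  · exact ⟨vecDeg v + E.card + 1, d.natDegree + E.card + 1, by omega, by omega,
      zero_lt_min_sub_iff.mpr ⟨by omega, by omega⟩, by rw [shift_eq]⟩
  · rintro _ ⟨ν, θ, hν, hθ, hδ, rfl⟩
    exact Nat.add_le_add_right (lower_bound ν θ hν hθ hδ) τ

/-- Proposition 4.2: (i) if `δ_{ν,θ} > 0` then
`𝓛(ν,θ) ≥ 𝓛(deg v, deg d) + |E| + 1`; (ii) for `ν = deg(v)+|E|+1`, `θ = deg(d)+|E|+1`,
`𝓛(ν,θ) = 𝓛(deg v, deg d) + |E| + 1` and `δ_{ν,θ} = 1 > 0`; consequently the minimal value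
of `𝓛(ν,θ)+τ` over pairs with `δ_{ν,θ} > 0` is `Lˢ = 𝓛(deg v, deg d) + |E| + 1 + τ`. -/
theorem stmt7 {F : Type*} [Field F] {n L : ℕ} (hn : 0 < n)
    (A : Matrix (Fin n) (Fin n) F[X]) (b v : Fin n → F[X]) (d : F[X])
    (hdet : A.det ≠ 0) (hmonic : d.Monic)
    (hcop : ∀ g : F[X], (∀ i, g ∣ v i) → g ∣ d → IsUnit g)
    (hsol : A.mulVec v = d • b)
    (E : Finset (Fin L)) (N D τ : ℕ) (hN : vecDeg v < N) (hD : d.natDegree < D) :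
    (∀ ν θ : ℕ, 1 ≤ ν → 1 ≤ θ →
      0 < min ((ν : ℤ) - ((vecDeg v + E.card : ℕ) : ℤ))
              ((θ : ℤ) - ((d.natDegree + E.card : ℕ) : ℤ)) →
      Lbound N D (matDeg A) (vecDeg b) (vecDeg v) d.natDegree + E.card + 1 ≤
        Lbound N D (matDeg A) (vecDeg b) ν θ) ∧
    (Lbound N D (matDeg A) (vecDeg b) (vecDeg v + E.card + 1) (d.natDegree + E.card + 1) =
        Lbound N D (matDeg A) (vecDeg b) (vecDeg v) d.natDegree + E.card + 1 ∧
      min (((vecDeg v + E.card + 1 : ℕ) : ℤ) - ((vecDeg v + E.card : ℕ) : ℤ))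
          (((d.natDegree + E.card + 1 : ℕ) : ℤ) - ((d.natDegree + E.card : ℕ) : ℤ)) = 1) ∧
    IsLeast {x : ℕ | ∃ ν θ : ℕ, 1 ≤ ν ∧ 1 ≤ θ ∧
        0 < min ((ν : ℤ) - ((vecDeg v + E.card : ℕ) : ℤ))
                ((θ : ℤ) - ((d.natDegree + E.card : ℕ) : ℤ)) ∧
        x = Lbound N D (matDeg A) (vecDeg b) ν θ + τ}
      (Lbound N D (matDeg A) (vecDeg b) (vecDeg v) d.natDegree + E.card + 1 + τ) :=
  stmt7_general A b v d E N D τ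
end
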